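/- arXiv:2602.07502 — 2 statements merged into one kernel-verified Lean document; each statement's English description precedes it below -/
import Mathlib

section
/- Let σ₁, …, σ_K be nonnegative reals, P_T > 0, τ > 0, and N > K (integers with N > K ≥ 1). Define F : [0,∞) → ℝ by F(λ) = λ·(P_T − Σ_{k=1}^K max(σ_k − λ, 0))² − τ(N−K)². Assuming P_T − Σ_k max(σ_k − λ, 0) > 0 for all λ in the relevant range, F is continuous, F(0) < 0, F is eventually positive, and F has a root λ > 0. Moreover F is nondecreasing on [0,∞), so the positive root is unique. -/
/-- Properties of F(λ) = λ(P_T − Σ max(σ_k − λ, 0))² − τ(N−K)²: continuity, F(0) < 0,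
eventual positivity, monotonicity on [0,∞), and existence of a unique positive root. -/
theorem Z_subproblem_root (K N : ℕ) (hK : 1 ≤ K) (hNK : K < N)
    (σ : Fin K → ℝ) (hσ : ∀ k, 0 ≤ σ k) (P τ : ℝ) (hP : 0 < P) (hτ : 0 < τ)
    (hpos : ∀ l : ℝ, 0 ≤ l → 0 < P - ∑ k, max (σ k - l) 0) :
    Continuous (fun l : ℝ => l * (P - ∑ k, max (σ k - l) 0) ^ 2 - τ * ((N : ℝ) - K) ^ 2) ∧
    (0 : ℝ) * (P - ∑ k, max (σ k - 0) 0) ^ 2 - τ * ((N : ℝ) - K) ^ 2 < 0 ∧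
    (∃ M : ℝ, ∀ l ≥ M,
      0 < l * (P - ∑ k, max (σ k - l) 0) ^ 2 - τ * ((N : ℝ) - K) ^ 2) ∧
    MonotoneOn (fun l : ℝ => l * (P - ∑ k, max (σ k - l) 0) ^ 2 - τ * ((N : ℝ) - K) ^ 2)
      (Set.Ici 0) ∧
    ∃! l : ℝ, 0 < l ∧
      l * (P - ∑ k, max (σ k - l) 0) ^ 2 - τ * ((N : ℝ) - K) ^ 2 = 0 := by
  set S : ℝ → ℝ := fun l => ∑ k, max (σ k - l) 0 with hS
  set c : ℝ := τ * ((N : ℝ) - K) ^ 2 with hc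
  set f : ℝ → ℝ := fun l => l * (P - S l) ^ 2 - c with hf
  have hc0 : 0 < c := by
    have hKN : (K : ℝ) < N := by exact_mod_cast hNK
    exact mul_pos hτ (pow_pos (by linarith) 2)
  haveI : Nonempty (Fin K) := Fin.pos_iff_nonempty.mp hK
  -- antitone S
  have hSanti : ∀ a b : ℝ, a ≤ b → S b ≤ S a := by
    intro a b hab
    apply Finset.sum_le_sum
    intro k _
    exact max_le_max (by linarith) le_rfl
  -- continuity
  have hcont : Continuous f := by
    apply Continuous.sub _ continuous_const
    apply Continuous.mul continuous_id
    apply Continuous.pow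
    apply Continuous.sub continuous_const
    exact continuous_finset_sum _ fun k _ =>
      ((continuous_const.sub continuous_id).max continuous_const)
  -- F(0) < 0
  have hF0 : f 0 < 0 := by simp [hf]; linarith
  -- strict monotonicity on positives
  have hstrict : ∀ a b : ℝ, 0 ≤ a → a < b → f a < f b := by
    intro a b ha hab
    have h1 : 0 < P - S a := hpos a ha
    have h2 : P - S a ≤ P - S b := by have := hSanti a b hab.le; linarith
    have h3 : (P - S a) ^ 2 ≤ (P - S b) ^ 2 := by
      exact pow_le_pow_left₀ h1.le h2 2
    have h4 : 0 < (P - S b) ^ 2 := pow_pos (hpos b (by linarith)) 2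
    have : a * (P - S a) ^ 2 < b * (P - S b) ^ 2 :=
      lt_of_le_of_lt (mul_le_mul_of_nonneg_left h3 ha)
        (mul_lt_mul_of_pos_right hab h4)
    simp [hf]; linarith
  -- monotone on Ici 0
  have hmono : MonotoneOn f (Set.Ici 0) := by
    intro a ha b _ hab
    rcases eq_or_lt_of_le hab with rfl | h
    · exact le_rfl
    · exact (hstrict a b ha h).le
  -- eventual positivity
  have hM : ∀ l : ℝ, (Finset.univ.sup' (Finset.univ_nonempty) σ) + c / P ^ 2 + 1 ≤ l →
      0 < f l := by
    intro l hl
    have hne : (Finset.univ : Finset (Fin K)).Nonempty := Finset.univ_nonempty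
    have hsup0 : 0 ≤ Finset.univ.sup' hne σ := by
      obtain ⟨k⟩ := (inferInstance : Nonempty (Fin K))
      exact le_trans (hσ k) (Finset.le_sup' σ (Finset.mem_univ k))
    have hSl : S l = 0 := by
      apply Finset.sum_eq_zero
      intro k _
      have : σ k ≤ Finset.univ.sup' hne σ := Finset.le_sup' σ (Finset.mem_univ k)
      have : σ k - l ≤ 0 := by
        have hcP : 0 ≤ c / P ^ 2 := by positivity
        linarith
      exact max_eq_right this
    have hl2 : c / P ^ 2 < l := by
      have hcP : 0 ≤ c / P ^ 2 := by positivity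
      linarith
    have : c < l * P ^ 2 := by
      have := (div_lt_iff₀ (by positivity : (0:ℝ) < P ^ 2)).mp hl2
      linarith
    simp [hf, hSl]
    linarith
  refine ⟨hcont, hF0, ⟨_, fun l hl => hM l hl⟩, hmono, ?_⟩
  -- existence via IVT
  set M : ℝ := (Finset.univ.sup' (Finset.univ_nonempty) σ) + c / P ^ 2 + 1 with hMdef
  have hMpos : 0 < f M := hM M le_rfl
  have h0M : (0:ℝ) ≤ M := by
    have hne : (Finset.univ : Finset (Fin K)).Nonempty := Finset.univ_nonempty
    have hsup0 : 0 ≤ Finset.univ.sup' hne σ := by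
      obtain ⟨k⟩ := (inferInstance : Nonempty (Fin K))
      exact le_trans (hσ k) (Finset.le_sup' σ (Finset.mem_univ k))
    have hcP : 0 ≤ c / P ^ 2 := by positivity
    simp only [hMdef]; linarith
  have hIcc : (0:ℝ) ∈ Set.Icc (f 0) (f M) := ⟨hF0.le, hMpos.le⟩
  have := intermediate_value_Icc h0M hcont.continuousOn hIcc
  obtain ⟨l, hlmem, hlroot⟩ := this
  have hl0 : 0 < l := by
    rcases eq_or_lt_of_le hlmem.1 with rfl | h
    · exact absurd hlroot (by linarith [hF0])
    · exact h
  refine ⟨l, ⟨hl0, hlroot⟩, ?_⟩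
  rintro y ⟨hy0, hyroot⟩
  by_contra hne
  have hyroot' : f y = 0 := hyroot
  rcases lt_or_gt_of_ne hne with h | h
  · have := hstrict y l hy0.le h; rw [hyroot', hlroot] at this; exact lt_irrefl 0 this
  · have := hstrict l y hl0.le h; rw [hyroot', hlroot] at this; exact lt_irrefl 0 this
end

section
/- Let X ⪰ 0 be a K×K positive semidefinite Hermitian matrix and Q = qqᴴ a rank-one PSD matrix with tr(QX) > 0, where q ∈ ℂ^K. Then the matrix W = XQX / tr(QX) is positive semidefinite, has rank one, and satisfies tr(QW) = tr(QX) and X − W ⪰ 0. -/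
open Matrix ComplexOrder

variable {K : ℕ}

lemma trace_vecMulVec_mul' (a b : Fin K → ℂ) (M : Matrix (Fin K) (Fin K) ℂ) :
    (Matrix.vecMulVec a b * M).trace = b ⬝ᵥ (M *ᵥ a) := by
  simp only [trace, diag, mul_apply, vecMulVec_apply, dotProduct, mulVec, Finset.mul_sum]
  rw [Finset.sum_comm]
  exact Finset.sum_congr rfl fun j _ => Finset.sum_congr rfl fun i _ => by ring

lemma XQX_eq' (X : Matrix (Fin K) (Fin K) ℂ) (q : Fin K → ℂ) (hX : X.IsHermitian) :
    X * Matrix.vecMulVec q (star q) * X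
      = Matrix.vecMulVec (X *ᵥ q) (star (X *ᵥ q)) := by
  ext i j
  simp only [mul_apply, vecMulVec_apply, Pi.star_apply, mulVec, dotProduct, star_sum, star_mul',
    Finset.sum_mul, Finset.mul_sum]
  refine Finset.sum_congr rfl fun a _ => Finset.sum_congr rfl fun b _ => ?_
  rw [hX.apply a j]
  ring

lemma dot_vecMulVec' (a b y z : Fin K → ℂ) :
    z ⬝ᵥ (Matrix.vecMulVec a b *ᵥ y) = (z ⬝ᵥ a) * (b ⬝ᵥ y) := by
  simp only [dotProduct, mulVec, vecMulVec_apply, Finset.sum_mul, Finset.mul_sum]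
  rw [Finset.sum_comm]
  exact Finset.sum_congr rfl fun i _ => Finset.sum_congr rfl fun j _ => by ring

lemma star_dot' (v w : Fin K → ℂ) : star v ⬝ᵥ w = star (star w ⬝ᵥ v) := by
  simp only [dotProduct, star_sum, star_mul', star_star, Pi.star_apply]
  exact Finset.sum_congr rfl fun i _ => by ring

lemma star_mulVec_dot (X : Matrix (Fin K) (Fin K) ℂ) (hX : X.IsHermitian) (q y : Fin K → ℂ) :
    star (X *ᵥ q) ⬝ᵥ y = star q ⬝ᵥ (X *ᵥ y) := by
  simp only [dotProduct, mulVec, Pi.star_apply, star_sum, star_mul', Finset.sum_mul,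
    Finset.mul_sum]
  rw [Finset.sum_comm]
  refine Finset.sum_congr rfl fun a _ => Finset.sum_congr rfl fun b _ => ?_
  rw [hX.apply a b]
  ring

example (β : ℂ) : 0 ≤ star β * β := star_mul_self_nonneg β
example (a b : ℂ) (ha : 0 ≤ a) (hb : 0 ≤ b) : 0 ≤ a * b := mul_nonneg ha hb

/-- Rank-one extraction: for X ⪰ 0 and Q = qqᴴ with tr(QX) > 0, the matrix
W = XQX / tr(QX) is PSD, has rank one, satisfies tr(QW) = tr(QX), and X − W ⪰ 0. -/
theorem rank_one_extraction (K : ℕ) (X : Matrix (Fin K) (Fin K) ℂ) (q : Fin K → ℂ)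
    (hX : X.PosSemidef)
    (htr : 0 < (Matrix.vecMulVec q (star q) * X).trace) :
    (((Matrix.vecMulVec q (star q) * X).trace)⁻¹ •
        (X * Matrix.vecMulVec q (star q) * X)).PosSemidef ∧
    (((Matrix.vecMulVec q (star q) * X).trace)⁻¹ •
        (X * Matrix.vecMulVec q (star q) * X)).rank = 1 ∧
    (Matrix.vecMulVec q (star q) *
        (((Matrix.vecMulVec q (star q) * X).trace)⁻¹ •
          (X * Matrix.vecMulVec q (star q) * X))).trace =
      (Matrix.vecMulVec q (star q) * X).trace ∧
    (X - ((Matrix.vecMulVec q (star q) * X).trace)⁻¹ •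
        (X * Matrix.vecMulVec q (star q) * X)).PosSemidef := by
  set Q := Matrix.vecMulVec q (star q) with hQ
  set u := X *ᵥ q with hu
  set c := (Q * X).trace with hcdef
  have hc : c = star q ⬝ᵥ u := trace_vecMulVec_mul' q (star q) X
  have hcne : c ≠ 0 := htr.ne'
  have him : c.im = 0 := ((Complex.lt_def.mp htr).2).symm
  have hstarc : star c = c := by
    rw [Complex.star_def]; exact Complex.conj_eq_iff_im.mpr him
  have hstarcinv : star c⁻¹ = c⁻¹ := by rw [star_inv₀, hstarc]
  have hre : c = (c.re : ℂ) := by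
    rw [Complex.star_def] at hstarc; exact (Complex.conj_eq_iff_re.mp hstarc).symm
  have hrepos : 0 < c.re := by
    have := (Complex.lt_def.mp htr).1; simpa using this
  have hcinvpos : 0 < c⁻¹ := by
    rw [hre, ← Complex.ofReal_inv]
    exact Complex.zero_lt_real.mpr (inv_pos.mpr hrepos)
  have hXQX : X * Q * X = Matrix.vecMulVec u (star u) := XQX_eq' X q hX.1
  have hWH : (c⁻¹ • Matrix.vecMulVec u (star u)).IsHermitian := by
    ext i j
    simp only [conjTranspose_apply, Matrix.smul_apply, vecMulVec_apply, Pi.star_apply,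
      smul_eq_mul, star_mul', star_star]
    rw [hstarcinv]
    ring
  have hWpsd : (c⁻¹ • (X * Q * X)).PosSemidef := by
    rw [hXQX]
    refine PosSemidef.of_dotProduct_mulVec_nonneg hWH fun y => ?_
    rw [smul_mulVec, dotProduct_smul, dot_vecMulVec', star_dot' y u, smul_eq_mul]
    exact mul_nonneg hcinvpos.le (star_mul_self_nonneg _)
  have hune : u ≠ 0 := fun h => hcne (by rw [hc, h, dotProduct_zero])
  have hd : star u ⬝ᵥ u ≠ 0 := fun h => hune (dotProduct_star_self_eq_zero.mp h)
  have hmv : Matrix.vecMulVec u (star u) *ᵥ u = (star u ⬝ᵥ u) • u := by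
    funext i
    simp only [mulVec, vecMulVec_apply, dotProduct, Pi.smul_apply, smul_eq_mul,
      Finset.sum_mul, Pi.star_apply]
    exact Finset.sum_congr rfl fun j _ => by ring
  -- rank
  have hrank : (c⁻¹ • (X * Q * X)).rank = 1 := by
    rw [hXQX]
    refine le_antisymm ?_ ?_
    · calc (c⁻¹ • Matrix.vecMulVec u (star u)).rank
          = ((c⁻¹ • Matrix.replicateCol (Fin 1) u) * Matrix.replicateRow (Fin 1) (star u)).rank := by
            rw [Matrix.smul_mul, Matrix.vecMulVec_eq (Fin 1)]; rfl
        _ ≤ (c⁻¹ • Matrix.replicateCol (Fin 1) u).rank := Matrix.rank_mul_le_left _ _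
        _ ≤ Fintype.card (Fin 1) := Matrix.rank_le_card_width _
        _ = 1 := by simp
    · rw [Nat.one_le_iff_ne_zero]
      intro h0
      have hbot : LinearMap.range (c⁻¹ • Matrix.vecMulVec u (star u)).mulVecLin = ⊥ :=
        Submodule.finrank_eq_zero.mp h0
      have hzero : (c⁻¹ • Matrix.vecMulVec u (star u)) *ᵥ u = 0 := by
        have : (c⁻¹ • Matrix.vecMulVec u (star u)).mulVecLin u = 0 := by
          rw [LinearMap.range_eq_bot] at hbot
          rw [hbot]; rfl
        simpa only [Matrix.mulVecLin_apply] using this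
      rw [smul_mulVec, hmv, smul_smul] at hzero
      exact smul_ne_zero (mul_ne_zero (inv_ne_zero hcne) hd) hune hzero
  -- trace identity
  have htrace : (Q * (c⁻¹ • (X * Q * X))).trace = c := by
    rw [hXQX, mul_smul_comm, trace_smul, hQ, trace_vecMulVec_mul', dot_vecMulVec']
    have h2 : star u ⬝ᵥ q = c := by rw [star_dot' u q, ← hc, hstarc]
    rw [h2, ← hc, smul_eq_mul]
    field_simp
  -- X - W psd
  have hsub : (X - c⁻¹ • (X * Q * X)).PosSemidef := by
    rw [hXQX]
    refine PosSemidef.of_dotProduct_mulVec_nonneg (hX.1.sub hWH) fun y => ?_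
    have e1 : star u ⬝ᵥ y = star q ⬝ᵥ (X *ᵥ y) := star_mulVec_dot X hX.1 q y
    have hkey : star y ⬝ᵥ ((X - c⁻¹ • Matrix.vecMulVec u (star u)) *ᵥ y)
        = star (y - (c⁻¹ * (star u ⬝ᵥ y)) • q) ⬝ᵥ
            (X *ᵥ (y - (c⁻¹ * (star u ⬝ᵥ y)) • q)) := by
      rw [Matrix.mulVec_sub, Matrix.mulVec_smul, ← hu, sub_mulVec, smul_mulVec]
      simp only [star_sub, star_smul, sub_dotProduct, dotProduct_sub, smul_dotProduct,
        dotProduct_smul, dot_vecMulVec', smul_eq_mul, star_mul', hstarcinv, ← e1,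
        star_dot' y u]
      field_simp
      rw [← hc]
      ring
    rw [hkey]
    exact hX.dotProduct_mulVec_nonneg _
  exact ⟨hWpsd, hrank, htrace, hsub⟩
end
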